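/- Let H ⊆ ℝ^d be a closed halfspace, i.e. H = {y ∈ ℝ^d : c_1 y_1 + ⋯ + c_d y_d ≤ t} for some nonzero c ∈ ℝ^d and t ∈ ℝ. Let rk_1,…,rk_n be megamatroids on {1,…,d}, all of the same rank r, and let a_1,…,a_n be integers such that Σ_{m=1}^n a_m [Q(rk_m)] = 0 as a function ℝ^d → ℤ. Then Σ_{m : Q(rk_m) ⊆ H} a_m = 0. -/

import Mathlib

open scoped BigOperators

/-- A megamatroid on the ground set `{1,…,d}` (modeled as `Fin d`): a function from
subsets to `ℤ ∪ {∞}` with `rk ∅ = 0`, `rk univ` finite, and submodularity on finite values. -/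
structure Megamatroid (d : ℕ) where
  rk : Finset (Fin d) → WithTop ℤ
  rk_empty : rk ∅ = 0
  rk_univ_ne_top : rk Finset.univ ≠ ⊤
  submodular : ∀ A B : Finset (Fin d), rk A ≠ ⊤ → rk B ≠ ⊤ →
    rk (A ∪ B) ≠ ⊤ ∧ rk (A ∩ B) ≠ ⊤ ∧ rk (A ∪ B) + rk (A ∩ B) ≤ rk A + rk B

/-- The base polyhedron `Q(rk)` of a megamatroid: points `y ∈ ℝ^d` with
`∑ i, y i = rk(univ)` and `∑ i ∈ A, y i ≤ rk A` whenever `rk A` is finite. -/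
def megaQ {d : ℕ} (M : Megamatroid d) : Set (Fin d → ℝ) :=
  {y | (∀ z : ℤ, M.rk Finset.univ = (z : WithTop ℤ) → ∑ i, y i = (z : ℝ)) ∧
    ∀ A : Finset (Fin d), ∀ z : ℤ, M.rk A = (z : WithTop ℤ) → ∑ i ∈ A, y i ≤ (z : ℝ)}


attribute [local instance] Classical.propDecidable

/-- The indicator function `[Π] : ℝ^d → ℤ` of a subset `Π ⊆ ℝ^d`. -/
noncomputable def indFn {d : ℕ} (P : Set (Fin d → ℝ)) : (Fin d → ℝ) → ℤ :=
  P.indicator fun _ => 1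

/-!
The Euler characteristic, equal to `1` on every nonempty compact convex set, is a valuation:
an integer relation `∑ aₘ [Cₘ] = 0` among compact convex sets forces `∑_{Cₘ ≠ ∅} aₘ = 0`.
In dimension one this is read off from the jumps of `σ ↦ ∑ aₘ [Cₘ](σ)` at left endpoints; in
higher dimension one slices along a coordinate. Cutting with a large ball extends it to closed
convex sets, and cutting with a closed halfspace `{s ≤ f}`, `s > t` close to `t`, isolates the
sets not contained in `{f ≤ t}`. Base polyhedra of megamatroids are closed and convex, and
nonempty: a point is built greedily along a maximal chain of sets of finite rank.
-/

open Set Filter Topology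

theorem eventually_nhdsLT_mem_Icc_iff (p q v : ℝ) :
    ∀ᶠ τ in 𝓝[<] v, τ ∈ Icc p q ↔ v ∈ Icc p q ∧ p ≠ v := by
  rcases le_or_gt v p with hvp | hpv
  · filter_upwards [self_mem_nhdsWithin] with τ (hτ : τ < v)
    exact iff_of_false (fun h => by linarith [h.1]) fun h => h.2 (le_antisymm h.1.1 hvp)
  rcases le_or_gt v q with hvq | hqv
  · filter_upwards [Ioo_mem_nhdsLT hpv] with τ hτ
    exact iff_of_true ⟨hτ.1.le, by linarith [hτ.2]⟩ ⟨⟨hpv.le, hvq⟩, hpv.ne⟩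
  · filter_upwards [Ioo_mem_nhdsLT hqv] with τ hτ
    exact iff_of_false (fun h => by linarith [h.2, hτ.1]) fun h => by linarith [h.1.2]

theorem sum_eq_zero_of_sum_indicator_Icc_eq_zero {ι : Type*} (a : ι → ℤ) (s : Finset ι)
    (p q : ι → ℝ) (hpq : ∀ m ∈ s, p m ≤ q m)
    (h : ∀ x, ∑ m ∈ s, a m * (Icc (p m) (q m)).indicator 1 x = 0) :
    ∑ m ∈ s, a m = 0 := by
  rw [← Finset.sum_fiberwise_of_maps_to (fun m hm => Finset.mem_image_of_mem p hm)]
  refine Finset.sum_eq_zero fun v _ => ?_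
  obtain ⟨τ, hτ⟩ := ((Filter.eventually_all_finset s).2 fun m _ =>
    eventually_nhdsLT_mem_Icc_iff (p m) (q m) v).exists
  have hjump : ∀ m ∈ s, (if p m = v then a m else 0) =
      a m * (Icc (p m) (q m)).indicator 1 v - a m * (Icc (p m) (q m)).indicator 1 τ := by
    intro m hm
    by_cases hv : p m = v
    · subst hv; simp [hτ m hm, hpq m hm]
    · simp [hτ m hm, hv, indicator_apply]
  rw [Finset.sum_filter, Finset.sum_congr rfl hjump, Finset.sum_sub_distrib, h, h, sub_zero]

/-- `if C.Nonempty then 1 else 0` is the Euler characteristic of a compact convex set `C`. -/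
def EulerCharValuative (ι E : Type*) [Fintype ι] [AddCommGroup E] [Module ℝ E]
    [TopologicalSpace E] : Prop :=
  ∀ (a : ι → ℤ) (C : ι → Set E), (∀ m, Convex ℝ (C m)) → (∀ m, IsCompact (C m)) →
    (∀ x, ∑ m, a m * (C m).indicator 1 x = 0) → ∑ m, (if (C m).Nonempty then a m else 0) = 0

namespace EulerCharValuative

variable {ι : Type*} [Fintype ι]

theorem of_subsingleton (E : Type*) [AddCommGroup E] [Module ℝ E] [TopologicalSpace E]
    [Subsingleton E] : EulerCharValuative ι E := by
  intro a C _ _ h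
  have hne : ∀ m, (C m).Nonempty ↔ (0 : E) ∈ C m := fun m =>
    ⟨fun ⟨x, hx⟩ => Subsingleton.elim x 0 ▸ hx, fun h => ⟨0, h⟩⟩
  simpa [hne, indicator_apply] using h 0

theorem real : EulerCharValuative ι ℝ := by
  intro a C hconv hcpt h
  have hIcc : ∀ m, (C m).Nonempty → C m = Icc (sInf (C m)) (sSup (C m)) := fun m hm =>
    eq_Icc_of_connected_compact ⟨hm, (hconv m).isPreconnected⟩ (hcpt m)
  rw [← Finset.sum_filter]
  refine sum_eq_zero_of_sum_indicator_Icc_eq_zero a _ (sInf <| C ·) (sSup <| C ·)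
    (fun m hm => csInf_le_csSup (Finset.mem_filter.1 hm).2 (hcpt m).bddBelow (hcpt m).bddAbove)
    fun x => ?_
  calc ∑ m with (C m).Nonempty, a m * (Icc (sInf (C m)) (sSup (C m))).indicator 1 x
      = ∑ m with (C m).Nonempty, a m * (C m).indicator 1 x :=
        Finset.sum_congr rfl fun m hm => by rw [← hIcc m (Finset.mem_filter.1 hm).2]
    _ = ∑ m, a m * (C m).indicator 1 x := Finset.sum_filter_of_ne fun m _ hm =>
        ⟨x, mem_of_indicator_ne_zero (right_ne_zero_of_mul hm)⟩
    _ = 0 := h x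

theorem prod {E : Type*} [AddCommGroup E] [Module ℝ E] [TopologicalSpace E]
    (hE : EulerCharValuative ι E) : EulerCharValuative ι (ℝ × E) := by
  intro a C hconv hcpt h
  set S : ι → ℝ → Set E := fun m σ => Prod.snd '' (C m ∩ Prod.fst ⁻¹' {σ})
  have hS : ∀ m σ x, x ∈ S m σ ↔ (σ, x) ∈ C m := by simp [S]
  have hslice : ∀ σ, ∑ m, a m * (Prod.fst '' C m).indicator 1 σ = 0 := by
    intro σ
    have := hE a (S · σ) (fun m => ((hconv m).inter ((convex_singleton σ).linear_preimage
      (LinearMap.fst ℝ ℝ E))).linear_image (LinearMap.snd ℝ ℝ E))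
      (fun m => ((hcpt m).inter_right (isClosed_singleton.preimage continuous_fst)).image
        continuous_snd) (fun x => by simpa [indicator_apply, hS] using h (σ, x))
    simpa [indicator_apply, Set.Nonempty, hS] using this
  simpa using real a (Prod.fst '' C ·) (fun m => (hconv m).linear_image (LinearMap.fst ℝ ℝ E))
    (fun m => (hcpt m).image continuous_fst) hslice

theorem congr {E F : Type*} [AddCommGroup E] [Module ℝ E] [TopologicalSpace E]
    [AddCommGroup F] [Module ℝ F] [TopologicalSpace F]
    (hE : EulerCharValuative ι E) (e : E ≃L[ℝ] F) : EulerCharValuative ι F := by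
  intro a C hconv hcpt h
  simpa [e.surjective.nonempty_preimage] using hE a (e ⁻¹' C ·)
    (fun m => (hconv m).linear_preimage (e : E →ₗ[ℝ] F))
    (fun m => e.toHomeomorph.isCompact_preimage.2 (hcpt m)) (fun x => h (e x))

theorem pi_fin : ∀ d : ℕ, EulerCharValuative ι (Fin d → ℝ)
  | 0 => of_subsingleton _
  | d + 1 => (pi_fin d).prod.congr (Fin.consEquivL ℝ fun _ => ℝ)

theorem of_finiteDimensional (E : Type*) [NormedAddCommGroup E] [NormedSpace ℝ E]
    [FiniteDimensional ℝ E] : EulerCharValuative ι E :=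
  (pi_fin _).congr (Module.finBasis ℝ E).equivFun.toContinuousLinearEquiv.symm

end EulerCharValuative

theorem sum_mul_indicator_inter_eq_zero {ι E : Type*} [Fintype ι] (a : ι → ℤ) (C : ι → Set E)
    (h : ∀ x, ∑ m, a m * (C m).indicator 1 x = 0) (K : Set E) (x : E) :
    ∑ m, a m * (C m ∩ K).indicator 1 x = 0 := by
  simp only [inter_indicator_one, Pi.mul_apply, ← mul_assoc, ← Finset.sum_mul, h, zero_mul]

section FiniteDimensional

variable {ι E : Type*} [Fintype ι] [NormedAddCommGroup E] [NormedSpace ℝ E]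
  [FiniteDimensional ℝ E] (a : ι → ℤ) (C : ι → Set E)

open Metric in
theorem sum_ite_nonempty_eq_zero_of_isClosed (hconv : ∀ m, Convex ℝ (C m))
    (hclosed : ∀ m, IsClosed (C m)) (h : ∀ x, ∑ m, a m * (C m).indicator 1 x = 0) :
    ∑ m, (if (C m).Nonempty then a m else 0) = 0 := by
  obtain ⟨R, hR⟩ : ∃ R, ∀ m, (C m).Nonempty → (C m ∩ closedBall 0 R).Nonempty := by
    refine (eventually_all.2 fun m => ?_).exists (f := atTop)
    by_cases hm : (C m).Nonempty
    · obtain ⟨x, hx⟩ := hm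
      filter_upwards [eventually_ge_atTop ‖x‖] with R hR _
      exact ⟨x, hx, mem_closedBall_zero_iff.2 hR⟩
    · exact Eventually.of_forall fun _ h => absurd h hm
  refine Eq.trans (Finset.sum_congr rfl fun m _ => ?_) <|
    EulerCharValuative.of_finiteDimensional E a (C · ∩ closedBall 0 R)
      (fun m => (hconv m).inter (convex_closedBall 0 R))
      (fun m => (isCompact_closedBall 0 R).inter_left (hclosed m))
      (sum_mul_indicator_inter_eq_zero a C h _)
  exact if_congr ⟨hR m, fun h => h.mono inter_subset_left⟩ rfl rfl

theorem sum_ite_subset_halfSpace_eq_zero (hconv : ∀ m, Convex ℝ (C m))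
    (hclosed : ∀ m, IsClosed (C m)) (hne : ∀ m, (C m).Nonempty)
    (h : ∀ x, ∑ m, a m * (C m).indicator 1 x = 0) (f : E →L[ℝ] ℝ) (t : ℝ) :
    ∑ m, (if C m ⊆ {y | f y ≤ t} then a m else 0) = 0 := by
  have htotal : ∑ m, a m = 0 := by
    simpa [hne] using sum_ite_nonempty_eq_zero_of_isClosed a C hconv hclosed h
  obtain ⟨s, hs, hts⟩ : ∃ s, (∀ m, ¬ C m ⊆ {y | f y ≤ t} → ∃ y ∈ C m, s ≤ f y) ∧ t < s := by
    refine ((eventually_all.2 fun m => ?_).and self_mem_nhdsWithin).exists (f := 𝓝[>] t)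
    by_cases hm : C m ⊆ {y | f y ≤ t}
    · exact Eventually.of_forall fun _ h => absurd hm h
    · obtain ⟨y, hy, hyt⟩ := not_subset.1 hm
      filter_upwards [Ioo_mem_nhdsGT (not_le.1 hyt)] with s hs _ using ⟨y, hy, hs.2.le⟩
  have hcut := sum_ite_nonempty_eq_zero_of_isClosed a (C · ∩ {y | s ≤ f y})
    (fun m => (hconv m).inter (convex_halfSpace_ge f.toLinearMap.isLinear s))
    (fun m => (hclosed m).inter (isClosed_le continuous_const f.continuous))
    (sum_mul_indicator_inter_eq_zero a C h _)
  have hmeets : ∀ m, (C m ∩ {y | s ≤ f y}).Nonempty ↔ ¬ C m ⊆ {y | f y ≤ t} := fun m =>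
    ⟨fun ⟨y, hy, hsy⟩ hsub => (hts.trans_le hsy).not_ge (hsub hy), hs m⟩
  simp only [hmeets, ← Finset.sum_filter] at hcut ⊢
  rw [← Finset.sum_filter_add_sum_filter_not Finset.univ (fun m => C m ⊆ {y | f y ≤ t})] at htotal
  omega

end FiniteDimensional

namespace Megamatroid

variable {d : ℕ} (M : Megamatroid d)

theorem exists_rk_union_rk_inter {A B : Finset (Fin d)} {zA zB : ℤ} (hA : M.rk A = zA)
    (hB : M.rk B = zB) :
    ∃ zU zI : ℤ, M.rk (A ∪ B) = zU ∧ M.rk (A ∩ B) = zI ∧ zU + zI ≤ zA + zB := by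
  obtain ⟨hU, hI, hle⟩ := M.submodular A B (hA ▸ WithTop.coe_ne_top) (hB ▸ WithTop.coe_ne_top)
  obtain ⟨zU, hzU⟩ := WithTop.ne_top_iff_exists.1 hU
  obtain ⟨zI, hzI⟩ := WithTop.ne_top_iff_exists.1 hI
  rw [← hzU, ← hzI, hA, hB] at hle
  exact ⟨zU, zI, hzU.symm, hzI.symm, mod_cast hle⟩

theorem exists_covered_by {C : Finset (Fin d)} (hC : C.Nonempty) :
    ∃ C' ⊂ C, M.rk C' ≠ ⊤ ∧
      ∀ D, M.rk D ≠ ⊤ → C' ⊆ D → D ⊆ C → D = C' ∨ D = C := by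
  obtain ⟨C', hC'⟩ := (C.powerset.filter fun D => M.rk D ≠ ⊤ ∧ D ≠ C).exists_maximal
    ⟨∅, by simp [M.rk_empty, hC.ne_empty.symm]⟩
  simp only [Finset.mem_filter, Finset.mem_powerset] at hC'
  obtain ⟨hC'C, hC'fin, hC'ne⟩ := hC'.prop
  refine ⟨C', hC'C.ssubset_of_ne hC'ne, hC'fin, fun D hD hC'D hDC => ?_⟩
  by_cases hDeq : D = C
  · exact .inr hDeq
  · exact .inl (hC'.eq_of_le ⟨hDC, hD, hDeq⟩ hC'D).symm

/-- `y` vanishes off `C` and lies in the base polyhedron of the restriction of `M` to `C`. -/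
def IsBaseOn (C : Finset (Fin d)) (y : Fin d → ℝ) : Prop :=
  (∀ i ∉ C, y i = 0) ∧ (∀ z : ℤ, M.rk C = z → ∑ i ∈ C, y i = z) ∧
    ∀ A ⊆ C, ∀ z : ℤ, M.rk A = z → ∑ i ∈ A, y i ≤ z

theorem isBaseOn_empty : M.IsBaseOn ∅ 0 := by
  refine ⟨fun _ _ => rfl, fun z hz => ?_, fun A hA z hz => ?_⟩
  · rw [M.rk_empty] at hz
    simp [← WithTop.coe_inj.1 hz]
  · rw [Finset.subset_empty.1 hA, M.rk_empty] at hz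
    simp [← WithTop.coe_inj.1 hz]

theorem IsBaseOn.add_single {C' C : Finset (Fin d)} {y : Fin d → ℝ} (hy : M.IsBaseOn C' y)
    (hC'C : C' ⊆ C) (hcover : ∀ D, M.rk D ≠ ⊤ → C' ⊆ D → D ⊆ C → D = C' ∨ D = C)
    {b : Fin d} (hbC : b ∈ C) (hbC' : b ∉ C') {zC zC' : ℤ} (hzC : M.rk C = zC)
    (hzC' : M.rk C' = zC') :
    M.IsBaseOn C (y + Pi.single b ((zC - zC' : ℤ) : ℝ)) := by
  obtain ⟨hsupp, hsum, hle⟩ := hy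
  have hsum_y : ∀ A, ∑ i ∈ A, y i = ∑ i ∈ A ∩ C', y i := fun A =>
    (Finset.sum_subset Finset.inter_subset_left fun i hi hi' =>
      hsupp i fun h => hi' (Finset.mem_inter.2 ⟨hi, h⟩)).symm
  refine ⟨fun i hi => ?_, fun z hz => ?_, fun A hA zA hzA => ?_⟩
  · have hib : i ≠ b := fun h => hi (h ▸ hbC)
    simp [hsupp i (fun h => hi (hC'C h)), hib]
  · rw [hzC, WithTop.coe_inj] at hz
    simp [Finset.sum_add_distrib, hsum_y C, Finset.inter_eq_right.2 hC'C, hsum zC' hzC',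
      Finset.sum_pi_single', hbC, ← hz]
  · obtain ⟨zU, zI, hzU, hzI, hsub⟩ := M.exists_rk_union_rk_inter hzA hzC'
    -- `A ∪ C'` has finite rank and lies between `C'` and `C`: so `A ⊆ C'` or `C \ C' ⊆ A`.
    rcases hcover (A ∪ C') (hzU ▸ WithTop.coe_ne_top) Finset.subset_union_right
      (Finset.union_subset hA hC'C) with hU | hU
    · have hAC' : A ⊆ C' := Finset.union_eq_right.1 hU
      have hbA : b ∉ A := fun h => hbC' (hAC' h)
      simpa [Finset.sum_add_distrib, Finset.sum_pi_single', hbA] using hle A hAC' zA hzA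
    · have hbA : b ∈ A := by
        rw [← hU] at hbC
        simpa [hbC'] using hbC
      rw [hU, hzC, WithTop.coe_inj] at hzU
      subst hzU
      calc ∑ i ∈ A, (y + Pi.single b ((zC - zC' : ℤ) : ℝ) : Fin d → ℝ) i
          = ∑ i ∈ A ∩ C', y i + ((zC - zC' : ℤ) : ℝ) := by
            simp only [Pi.add_apply, Finset.sum_add_distrib, Finset.sum_pi_single', hbA, if_true,
              hsum_y A]
        _ ≤ zI + ((zC - zC' : ℤ) : ℝ) := by gcongr; exact hle _ Finset.inter_subset_right zI hzI
        _ ≤ zA := by exact_mod_cast (by linarith : zI + (zC - zC') ≤ zA)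

theorem exists_isBaseOn (C : Finset (Fin d)) (hC : M.rk C ≠ ⊤) : ∃ y, M.IsBaseOn C y := by
  induction C using Finset.strongInduction with
  | H C ih =>
    rcases C.eq_empty_or_nonempty with rfl | hne
    · exact ⟨0, M.isBaseOn_empty⟩
    obtain ⟨C', hC'C, hC'fin, hcover⟩ := M.exists_covered_by hne
    obtain ⟨y, hy⟩ := ih C' hC'C hC'fin
    obtain ⟨b, hbC, hbC'⟩ := Finset.exists_of_ssubset hC'C
    obtain ⟨zC, hzC⟩ := WithTop.ne_top_iff_exists.1 hC
    obtain ⟨zC', hzC'⟩ := WithTop.ne_top_iff_exists.1 hC'fin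
    exact ⟨_, hy.add_single M hC'C.subset hcover hbC hbC' hzC.symm hzC'.symm⟩

theorem nonempty_megaQ : (megaQ M).Nonempty := by
  obtain ⟨y, -, hsum, hle⟩ := M.exists_isBaseOn Finset.univ M.rk_univ_ne_top
  exact ⟨y, hsum, fun A => hle A A.subset_univ⟩

theorem isClosed_megaQ : IsClosed (megaQ M) := by
  simp only [megaQ, ofPred_and, ofPred_forall]
  exact (isClosed_iInter fun z => isClosed_iInter fun _ =>
    isClosed_eq (by fun_prop) continuous_const).inter <| isClosed_iInter fun A =>
      isClosed_iInter fun z => isClosed_iInter fun _ => isClosed_le (by fun_prop) continuous_const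

theorem convex_megaQ : Convex ℝ (megaQ M) := by
  have hlin : ∀ A : Finset (Fin d), IsLinearMap ℝ fun y : Fin d → ℝ => ∑ i ∈ A, y i :=
    fun A => ⟨fun _ _ => Finset.sum_add_distrib,
      fun c y => (Finset.smul_sum (r := c) (f := y) (s := A)).symm⟩
  simp only [megaQ, ofPred_and, ofPred_forall]
  exact (convex_iInter fun z => convex_iInter fun _ => convex_hyperplane (hlin _) _).inter <|
    convex_iInter fun A => convex_iInter fun z => convex_iInter fun _ =>
      convex_halfSpace_le (hlin A) _

end Megamatroid

theorem halfspace_valuative_general (d : ℕ) (c : Fin d → ℝ) (t : ℝ)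
    (n : ℕ) (M : Fin n → Megamatroid d)
    (a : Fin n → ℤ)
    (hzero : (∑ m, a m • indFn (megaQ (M m))) = 0) :
    (∑ m, if megaQ (M m) ⊆ {y : Fin d → ℝ | ∑ i, c i * y i ≤ t} then a m else 0) = 0 := by
  have h : ∀ x, ∑ m, a m * (megaQ (M m)).indicator 1 x = 0 := fun x => by
    simpa [indFn, Pi.one_def] using congrFun hzero x
  have hH : {y : Fin d → ℝ | ∑ i, c i * y i ≤ t} =
      {y | (∑ i, c i • ContinuousLinearMap.proj (R := ℝ) i) y ≤ t} := by
    simp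
  rw [hH]
  exact sum_ite_subset_halfSpace_eq_zero a (megaQ <| M ·) (fun m => (M m).convex_megaQ)
    (fun m => (M m).isClosed_megaQ) (fun m => (M m).nonempty_megaQ) h _ t

/-- Lemma `lemj_H`: containment in a closed halfspace `H` is valuative: if
`∑ m, a_m [Q(rk_m)] = 0` for megamatroids of common rank `r`, then
`∑_{m : Q(rk_m) ⊆ H} a_m = 0`. -/
theorem halfspace_valuative (d : ℕ) (r : ℤ) (c : Fin d → ℝ) (hc : c ≠ 0) (t : ℝ)
    (n : ℕ) (M : Fin n → Megamatroid d)
    (hrank : ∀ m, (M m).rk Finset.univ = (r : WithTop ℤ))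
    (a : Fin n → ℤ)
    (hzero : (∑ m, a m • indFn (megaQ (M m))) = 0) :
    (∑ m, if megaQ (M m) ⊆ {y : Fin d → ℝ | ∑ i, c i * y i ≤ t} then a m else 0) = 0 :=
  halfspace_valuative_general d c t n M a hzero
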